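/- arXiv:1104.3856 — 4 statements merged into one kernel-verified Lean document; each statement's English description precedes it below -/
import Mathlib

section
/- For every natural number n, the identity ∑_{k=0}^n C(2k,k)^3 * C(k, n-k) * (-16)^(n-k) = ∑_{k=0}^n C(2k,k)^2 * C(2(n-k), n-k)^2 holds. -/
/-!
Creative telescoping. Both sides, viewed as sequences `S n`, satisfy the second-order recurrence
`(n + 2)³ S (n + 2) - 8 (2n + 3)(2n² + 6n + 5) S (n + 1) + 256 (n + 1)³ S n = 0`
and agree for `n = 0, 1`. For each side the recurrence comes from a rational certificate
`G (n, k) = R (n, k) F (n, k)` (found by Zeilberger's algorithm) such that the recurrence operator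
applied to the summand `F (n, k)` equals `G (n, k + 1) - G (n, k)`; summing over `k` leaves only
boundary terms, which cancel.
-/

open Finset Nat

section Binomial

variable {K : Type*} [Field K] [CharZero K]

theorem cast_centralBinom_succ (n : ℕ) :
    (centralBinom (n + 1) : K) = 2 * (2 * n + 1) / (n + 1) * centralBinom n := by
  rw [div_mul_eq_mul_div, eq_div_iff (Nat.cast_add_one_ne_zero n), mul_comm]
  exact_mod_cast succ_mul_centralBinom_succ n

theorem cast_choose_succ_right (n k : ℕ) :
    (n.choose (k + 1) : K) = n.choose k * (n - k) / (k + 1) := by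
  rcases le_or_gt k n with h | h
  · field_simp
    rw [← Nat.cast_sub h]
    exact_mod_cast choose_succ_right_eq n k
  · simp [choose_eq_zero_of_lt h, choose_eq_zero_of_lt (h.trans (lt_succ_self k))]

theorem cast_choose_eq_choose_succ_left (n k : ℕ) :
    (n.choose k : K) = (n + 1).choose k * (n + 1 - k) / (n + 1) := by
  rcases le_or_gt k (n + 1) with h | h
  · field_simp
    rw [← Nat.cast_one, ← Nat.cast_add, ← Nat.cast_sub h]
    exact_mod_cast choose_mul_succ_eq n k
  · simp [choose_eq_zero_of_lt h, choose_eq_zero_of_lt ((lt_succ_self n).trans h)]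

end Binomial

section Recurrence

variable {R : Type*} [CommRing R]

/-- Summands are indexed by `(k, n - k)`, so that the telescoping identities below can be stated
without truncated subtraction. -/
def diagSum (f : ℕ → ℕ → R) (n : ℕ) : R := ∑ k ∈ range (n + 1), f k (n - k)

theorem diagSum_recurrence (f g : ℕ → ℕ → R) (p₀ p₁ p₂ : ℕ → R)
    (hfg : ∀ k w, p₀ (k + w + 1) * f k (w + 3) + p₁ (k + w + 1) * f k (w + 2)
      + p₂ (k + w + 1) * f k (w + 1) = g (k + 1) w - g k (w + 1)) (n : ℕ) :
    p₀ n * diagSum f (n + 2) + p₁ n * diagSum f (n + 1) + p₂ n * diagSum f n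
      = g n 0 - g 0 n + p₀ n * (f n 2 + f (n + 1) 1 + f (n + 2) 0)
        + p₁ n * (f n 1 + f (n + 1) 0) + p₂ n * f n 0 := by
  have htel : ∑ k ∈ range n,
      (p₀ n * f k (n + 2 - k) + p₁ n * f k (n + 1 - k) + p₂ n * f k (n - k)) = g n 0 - g 0 n := by
    have h := sum_range_sub (fun k ↦ g k (n - k)) n
    simp only [Nat.sub_self, Nat.sub_zero] at h
    rw [← h]
    refine sum_congr rfl fun k hk ↦ ?_
    obtain ⟨w, rfl⟩ : ∃ w, n = k + w + 1 := ⟨n - k - 1, by grind⟩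
    have e₁ : k + w + 1 + 2 - k = w + 3 := by omega
    have e₂ : k + w + 1 + 1 - k = w + 2 := by omega
    have e₃ : k + w + 1 - k = w + 1 := by omega
    have e₄ : k + w + 1 - (k + 1) = w := by omega
    rw [e₁, e₂, e₃, e₄]
    exact hfg k w
  simp only [diagSum, sum_range_succ, Nat.add_sub_cancel_left, Nat.sub_self,
    Nat.add_sub_add_left] at htel ⊢
  rw [← htel]
  simp only [mul_add, sum_add_distrib, mul_sum]
  ring

theorem eq_of_recurrence [NoZeroDivisors R] {p₀ p₁ p₂ a b : ℕ → R} (hp₀ : ∀ n, p₀ n ≠ 0)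
    (ha : ∀ n, p₀ n * a (n + 2) + p₁ n * a (n + 1) + p₂ n * a n = 0)
    (hb : ∀ n, p₀ n * b (n + 2) + p₁ n * b (n + 1) + p₂ n * b n = 0)
    (h₀ : a 0 = b 0) (h₁ : a 1 = b 1) : a = b := by
  suffices h : ∀ n, a n = b n ∧ a (n + 1) = b (n + 1) from funext fun n ↦ (h n).1
  intro n
  induction n with
  | zero => exact ⟨h₀, h₁⟩
  | succ n ih =>
    refine ⟨ih.2, ?_⟩
    have h : p₀ n * (a (n + 2) - b (n + 2)) = 0 := by
      linear_combination ha n - hb n - p₁ n * ih.2 - p₂ n * ih.1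
    exact sub_eq_zero.mp ((mul_eq_zero.mp h).resolve_left (hp₀ n))

end Recurrence

def coeff₀ (n : ℕ) : ℚ := (n + 2) ^ 3
def coeff₁ (n : ℕ) : ℚ := -8 * (2 * n + 3) * (2 * n ^ 2 + 6 * n + 5)
def coeff₂ (n : ℕ) : ℚ := 256 * (n + 1) ^ 3

def lhsTerm (k v : ℕ) : ℚ := centralBinom k ^ 3 * k.choose v * (-16) ^ v
def rhsTerm (k v : ℕ) : ℚ := centralBinom k ^ 2 * centralBinom v ^ 2

-- `lhsCert k (n - k)` and `rhsCert k (n - k)` are the certificates `G (n, k)`.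
def lhsCert (k w : ℕ) : ℚ :=
  256 * k ^ 2 * (k - w) * ((w + 1) * (w + 2) - k * (k + 1)) / ((w + 1) * (w + 2)) * lhsTerm k w
def rhsCert (k w : ℕ) : ℚ :=
  16 * k ^ 2 * (2 * w + 1) ^ 2 * ((w + 2) * (4 * w + 5) + k * (4 * w + 7)) /
    ((w + 1) ^ 2 * (w + 2) ^ 2) * rhsTerm k w

theorem lhsTerm_telescoping (k w : ℕ) :
    coeff₀ (k + w + 1) * lhsTerm k (w + 3) + coeff₁ (k + w + 1) * lhsTerm k (w + 2)
      + coeff₂ (k + w + 1) * lhsTerm k (w + 1) = lhsCert (k + 1) w - lhsCert k (w + 1) := by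
  simp only [coeff₀, coeff₁, coeff₂, lhsCert, lhsTerm, cast_centralBinom_succ k,
    cast_choose_succ_right k (w + 2), cast_choose_succ_right k (w + 1),
    cast_choose_succ_right k w, cast_choose_eq_choose_succ_left k w, pow_succ]
  push_cast
  field_simp
  ring

theorem rhsTerm_telescoping (k w : ℕ) :
    coeff₀ (k + w + 1) * rhsTerm k (w + 3) + coeff₁ (k + w + 1) * rhsTerm k (w + 2)
      + coeff₂ (k + w + 1) * rhsTerm k (w + 1) = rhsCert (k + 1) w - rhsCert k (w + 1) := by
  simp only [coeff₀, coeff₁, coeff₂, rhsCert, rhsTerm, cast_centralBinom_succ k,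
    cast_centralBinom_succ (w + 2), cast_centralBinom_succ (w + 1), cast_centralBinom_succ w]
  push_cast
  field_simp
  ring

theorem diagSum_lhsTerm_recurrence (n : ℕ) :
    coeff₀ n * diagSum lhsTerm (n + 2) + coeff₁ n * diagSum lhsTerm (n + 1)
      + coeff₂ n * diagSum lhsTerm n = 0 := by
  rw [diagSum_recurrence lhsTerm lhsCert coeff₀ coeff₁ coeff₂ lhsTerm_telescoping,
    show n + 2 = n + 1 + 1 from rfl]
  simp only [coeff₀, coeff₁, coeff₂, lhsCert, lhsTerm, cast_centralBinom_succ (n + 1),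
    cast_centralBinom_succ n, cast_choose_two, choose_zero_right, choose_one_right]
  push_cast
  field_simp
  ring

theorem diagSum_rhsTerm_recurrence (n : ℕ) :
    coeff₀ n * diagSum rhsTerm (n + 2) + coeff₁ n * diagSum rhsTerm (n + 1)
      + coeff₂ n * diagSum rhsTerm n = 0 := by
  rw [diagSum_recurrence rhsTerm rhsCert coeff₀ coeff₁ coeff₂ rhsTerm_telescoping,
    show n + 2 = n + 1 + 1 from rfl]
  simp only [coeff₀, coeff₁, coeff₂, rhsCert, rhsTerm, cast_centralBinom_succ (n + 1),
    cast_centralBinom_succ n, centralBinom_zero, show centralBinom 1 = 2 from rfl,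
    show centralBinom 2 = 6 from rfl]
  push_cast
  field_simp
  ring

theorem stmt_0 (n : ℕ) :
    ∑ k ∈ Finset.range (n + 1),
      ((Nat.choose (2 * k) k : ℤ) ^ 3 * (Nat.choose k (n - k)) * (-16) ^ (n - k))
    = ∑ k ∈ Finset.range (n + 1),
      ((Nat.choose (2 * k) k : ℤ) ^ 2 * (Nat.choose (2 * (n - k)) (n - k)) ^ 2) := by
  have hcoeff₀ : ∀ n, coeff₀ n ≠ 0 := fun n ↦ by unfold coeff₀; positivity
  have h := congrFun (eq_of_recurrence hcoeff₀ diagSum_lhsTerm_recurrence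
    diagSum_rhsTerm_recurrence (by norm_num [diagSum, lhsTerm, rhsTerm])
    (by norm_num [diagSum, lhsTerm, rhsTerm, sum_range_succ, centralBinom])) n
  simp only [diagSum, lhsTerm, rhsTerm, centralBinom_eq_two_mul_choose] at h
  exact_mod_cast h
end

section
/- For every natural number n, 64^n * ∑_{k=0}^n C(-1/4, k)^2 * C(-3/4, n-k)^2 = ∑_{k=0}^n C(2k,k)^3 * C(2(n-k), n-k) * 16^(n-k), where C(-1/4, k) and C(-3/4, k) are generalized binomial coefficients with rational upper arguments. -/
/-!
Both sides are Cauchy products `∑ₖ A(k) B(n-k)` of hypergeometric sequences, and Zeilberger's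
creative telescoping shows that both satisfy the recurrence
`(n+2)³ s(n+2) - 8(2n+3)(8n²+24n+21) s(n+1) + 4096(n+1)³ s(n) = 0`:
applied to the summands `F(n,k) = A(k) B(n-k)`, the recurrence is a difference `G(k+1) - G(k)`
with `G(k) = R(n,k) F(n+2,k)` for a rational certificate `R`, so it sums to zero.
The two sides agree for `n = 0, 1`, hence everywhere.
-/

/-- Generalized binomial coefficient `x(x-1)⋯(x-k+1)/k!` for rational `x`. -/
def qchoose (x : ℚ) (k : ℕ) : ℚ :=
  (∏ i ∈ Finset.range k, (x - i)) / (Nat.factorial k)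

lemma qchoose_zero (x : ℚ) : qchoose x 0 = 1 := by simp [qchoose]

lemma qchoose_one (x : ℚ) : qchoose x 1 = x := by simp [qchoose]

lemma qchoose_succ (x : ℚ) (k : ℕ) : qchoose x (k + 1) = qchoose x k * (x - k) / (k + 1) := by
  simp only [qchoose, Finset.prod_range_succ, Nat.factorial_succ, Nat.cast_mul, Nat.cast_succ]
  rw [div_mul_eq_mul_div, div_div, mul_comm ((k : ℚ) + 1)]

lemma centralBinom_succ_cast (k : ℕ) :
    (Nat.centralBinom (k + 1) : ℚ) = 2 * (2 * k + 1) / (k + 1) * Nat.centralBinom k := by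
  have h : ((k + 1 : ℕ) : ℚ) * Nat.centralBinom (k + 1)
      = (2 * (2 * k + 1) : ℕ) * Nat.centralBinom k := mod_cast Nat.succ_mul_centralBinom_succ k
  push_cast at h
  field_simp
  linarith

section CreativeTelescoping

variable {K : Type*} [CommRing K]

def cauchyProd (A B : ℕ → K) (n : ℕ) : K := ∑ k ∈ Finset.range (n + 1), A k * B (n - k)

lemma cauchyProd_eq_sum_range (A B : ℕ → K) {n N : ℕ} (h : n < N) :
    cauchyProd A B n = ∑ k ∈ Finset.range N, if k ≤ n then A k * B (n - k) else 0 := by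
  rw [← Finset.sum_filter, cauchyProd]
  congr 1
  ext k
  simp only [Finset.mem_range, Finset.mem_filter]
  omega

/-- Creative telescoping with certificate `R n k · A k · B (n + 2 - k)`. `generic` is the
telescoping identity at `n = k + m`; `edge₁`, `edge₂` are the terms `k = n + 1, n + 2`, where
the summands of the shorter sums are truncated to `0`. -/
theorem cauchyProd_recurrence {A B a b c : ℕ → K} (R : ℕ → ℕ → K)
    (hR : ∀ n, R n 0 = 0)
    (generic : ∀ k m, a (k + m) * (A k * B (m + 2)) + b (k + m) * (A k * B (m + 1))
        + c (k + m) * (A k * B m)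
      = R (k + m) (k + 1) * (A (k + 1) * B (m + 1)) - R (k + m) k * (A k * B (m + 2)))
    (edge₁ : ∀ n, a n * (A (n + 1) * B 1) + b n * (A (n + 1) * B 0)
      = R n (n + 2) * (A (n + 2) * B 0) - R n (n + 1) * (A (n + 1) * B 1))
    (edge₂ : ∀ n, a n * (A (n + 2) * B 0) = -(R n (n + 2) * (A (n + 2) * B 0)))
    (n : ℕ) :
    a n * cauchyProd A B (n + 2) + b n * cauchyProd A B (n + 1) + c n * cauchyProd A B n = 0 := by
  set F : ℕ → ℕ → K := fun n k => if k ≤ n then A k * B (n - k) else 0 with hF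
  set G : ℕ → K := fun k => R n k * F (n + 2) k with hG
  have local_identity : ∀ k ∈ Finset.range (n + 3),
      a n * F (n + 2) k + b n * F (n + 1) k + c n * F n k = G (k + 1) - G k := by
    intro k hk
    rw [Finset.mem_range] at hk
    rcases Nat.lt_or_ge n k with hnk | hkn
    · obtain rfl | rfl : k = n + 1 ∨ k = n + 2 := by omega
      · simpa [hF, hG, show n + 2 - (n + 1) = 1 by omega] using edge₁ n
      · simpa [hF, hG, ← sub_eq_add_neg] using edge₂ n
    · obtain ⟨m, rfl⟩ := Nat.exists_eq_add_of_le hkn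
      simpa [hF, hG, show k + m + 2 - k = m + 2 by omega, show k + m + 1 - k = m + 1 by omega,
        show k + m + 2 - (k + 1) = m + 1 by omega, show k + 1 ≤ k + m + 2 by omega,
        show k ≤ k + m + 1 by omega, show k ≤ k + m + 2 by omega] using generic k m
  have telescope := Finset.sum_congr rfl local_identity
  rw [Finset.sum_range_sub, Finset.sum_add_distrib, Finset.sum_add_distrib, ← Finset.mul_sum,
    ← Finset.mul_sum, ← Finset.mul_sum] at telescope
  rw [cauchyProd_eq_sum_range A B (show n + 2 < n + 3 by omega),
    cauchyProd_eq_sum_range A B (show n + 1 < n + 3 by omega),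
    cauchyProd_eq_sum_range A B (show n < n + 3 by omega), telescope]
  simp [hG, hF, hR]

theorem eq_of_recurrence_s5 [IsDomain K] {u v a b c : ℕ → K} (ha : ∀ n, a n ≠ 0)
    (hu : ∀ n, a n * u (n + 2) + b n * u (n + 1) + c n * u n = 0)
    (hv : ∀ n, a n * v (n + 2) + b n * v (n + 1) + c n * v n = 0)
    (h₀ : u 0 = v 0) (h₁ : u 1 = v 1) : u = v := by
  suffices h : ∀ n, u n = v n ∧ u (n + 1) = v (n + 1) from funext fun n => (h n).1
  intro n
  induction n with
  | zero => exact ⟨h₀, h₁⟩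
  | succ n ih =>
    refine ⟨ih.2, mul_left_cancel₀ (ha n) ?_⟩
    linear_combination hu n - hv n - b n * ih.2 - c n * ih.1

end CreativeTelescoping

def SolvesRecurrence (s : ℕ → ℚ) : Prop :=
  ∀ n : ℕ, ((n : ℚ) + 2) ^ 3 * s (n + 2)
    + -8 * (2 * n + 3) * (8 * n ^ 2 + 24 * n + 21) * s (n + 1)
    + 4096 * ((n : ℚ) + 1) ^ 3 * s n = 0

lemma solvesRecurrence_cauchyProd_centralBinom :
    SolvesRecurrence (cauchyProd (fun k => (Nat.centralBinom k : ℚ) ^ 3)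
      (fun m => Nat.centralBinom m * 16 ^ m)) := by
  refine cauchyProd_recurrence (fun n k => (k : ℚ) ^ 3 / (2 * n - 2 * k + 3)) (by simp) ?_ ?_ ?_
  · intro k m
    simp only [centralBinom_succ_cast, pow_add, Nat.cast_add, Nat.cast_one]
    rw [show 2 * ((k : ℚ) + m) - 2 * (k + 1) + 3 = 2 * m + 1 by ring,
      show 2 * ((k : ℚ) + m) - 2 * k + 3 = 2 * m + 3 by ring]
    field_simp
    ring
  · intro n
    simp only [centralBinom_succ_cast (n + 1), Nat.centralBinom_zero,
      show Nat.centralBinom 1 = 2 by decide]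
    rw [show 2 * (n : ℚ) - 2 * ((n + 2 : ℕ) : ℚ) + 3 = -1 by push_cast; ring,
      show 2 * (n : ℚ) - 2 * ((n + 1 : ℕ) : ℚ) + 3 = 1 by push_cast; ring]
    field_simp
    push_cast
    ring
  · intro n
    rw [show 2 * (n : ℚ) - 2 * ((n + 2 : ℕ) : ℚ) + 3 = -1 by push_cast; ring]
    push_cast
    ring

lemma solvesRecurrence_cauchyProd_qchoose :
    SolvesRecurrence (cauchyProd (fun k => 64 ^ k * qchoose (-1/4) k ^ 2)
      (fun m => 64 ^ m * qchoose (-3/4) m ^ 2)) := by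
  refine cauchyProd_recurrence
    (fun n k => (k : ℚ) ^ 2 * (8 * k * (n - k) + 18 * k - 3 * n - 6) / (4 * n - 4 * k + 7) ^ 2)
    (by simp) ?_ ?_ ?_
  · intro k m
    simp only [qchoose_succ, pow_add, Nat.cast_add, Nat.cast_one]
    rw [show 4 * ((k : ℚ) + m) - 4 * (k + 1) + 7 = 4 * m + 3 by ring,
      show 4 * ((k : ℚ) + m) - 4 * k + 7 = 4 * m + 7 by ring]
    field_simp
    ring
  · intro n
    simp only [qchoose_succ (-1/4) (n + 1), qchoose_one, qchoose_zero]
    rw [show 4 * (n : ℚ) - 4 * ((n + 2 : ℕ) : ℚ) + 7 = -1 by push_cast; ring,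
      show 4 * (n : ℚ) - 4 * ((n + 1 : ℕ) : ℚ) + 7 = 3 by push_cast; ring]
    field_simp
    push_cast
    ring
  · intro n
    rw [show 4 * (n : ℚ) - 4 * ((n + 2 : ℕ) : ℚ) + 7 = -1 by push_cast; ring]
    simp only [qchoose_zero]
    push_cast
    ring

theorem stmt_5 (n : ℕ) :
    (64 : ℚ) ^ n *
      ∑ k ∈ Finset.range (n + 1), (qchoose (-1/4) k) ^ 2 * (qchoose (-3/4) (n - k)) ^ 2
    = ∑ k ∈ Finset.range (n + 1),
        ((Nat.choose (2 * k) k : ℚ) ^ 3 * (Nat.choose (2 * (n - k)) (n - k)) * 16 ^ (n - k)) := by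
  have lhs : (64 : ℚ) ^ n *
      ∑ k ∈ Finset.range (n + 1), (qchoose (-1/4) k) ^ 2 * (qchoose (-3/4) (n - k)) ^ 2
      = cauchyProd (fun k => 64 ^ k * qchoose (-1/4) k ^ 2)
          (fun m => 64 ^ m * qchoose (-3/4) m ^ 2) n := by
    rw [cauchyProd, Finset.mul_sum]
    refine Finset.sum_congr rfl fun k hk => ?_
    rw [← pow_mul_pow_sub (64 : ℚ) (Finset.mem_range_succ_iff.mp hk)]
    ring
  have rhs : ∑ k ∈ Finset.range (n + 1),
      ((Nat.choose (2 * k) k : ℚ) ^ 3 * (Nat.choose (2 * (n - k)) (n - k)) * 16 ^ (n - k))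
      = cauchyProd (fun k => (Nat.centralBinom k : ℚ) ^ 3)
          (fun m => Nat.centralBinom m * 16 ^ m) n := by
    simp only [cauchyProd, Nat.centralBinom_eq_two_mul_choose, mul_assoc]
  rw [lhs, rhs, eq_of_recurrence_s5 (fun n => by positivity) solvesRecurrence_cauchyProd_qchoose
    solvesRecurrence_cauchyProd_centralBinom (by simp [cauchyProd, qchoose_zero])
    (by simp [cauchyProd, Finset.sum_range_succ, qchoose_zero, qchoose_one,
      show Nat.centralBinom 1 = 2 by decide]; norm_num)]
end

section
/- For every real m with |m| > 4, the series ∑_{k=0}^∞ k * C(2k,k)/m^k converges to (2/(m-4)) * √(m/(m-4)). -/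
/-!
With `y = 4 / m`, the coefficients `C(2k,k) / 4^k` are the binomial-series coefficients
`multichoose (1/2) k` of `(1 - y)^(-1/2)`. The absorption identity
`k · multichoose a k = a · multichoose (a + 1) (k - 1)` turns `∑ k cₖ yᵏ` into
`(y / 2) (1 - y)^(-3/2)`, which is the claimed value.
-/

namespace Ring

section

open Polynomial

variable {R : Type*} [CommRing R] [BinomialRing R]

attribute [local instance] BinomialRing.toIsAddTorsionFree

theorem succ_nsmul_multichoose_succ_right (r : R) (n : ℕ) :
    (n + 1) • multichoose r (n + 1) = (r + n) * multichoose r n := by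
  rw [← nsmul_right_inj (Nat.factorial_ne_zero n), smul_smul, mul_comm, ← Nat.factorial_succ,
    factorial_nsmul_multichoose_eq_ascPochhammer, ascPochhammer_succ_right, smeval_mul,
    ← mul_smul_comm, ← factorial_nsmul_multichoose_eq_ascPochhammer, mul_comm]
  simp [smeval_add, smeval_X, smeval_natCast]

theorem succ_nsmul_multichoose_succ_left (r : R) (n : ℕ) :
    (n + 1) • multichoose r (n + 1) = r * multichoose (r + 1) n := by
  rw [← nsmul_right_inj (Nat.factorial_ne_zero n), smul_smul, mul_comm, ← Nat.factorial_succ,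
    factorial_nsmul_multichoose_eq_ascPochhammer, ascPochhammer_succ_left, smeval_X_mul,
    smeval_comp, ← mul_smul_comm, ← factorial_nsmul_multichoose_eq_ascPochhammer]
  simp [smeval_add, smeval_X, smeval_one]

end

theorem multichoose_half_mul_four_pow {K : Type*} [Field K] [CharZero K] (n : ℕ) :
    multichoose (2⁻¹ : K) n * 4 ^ n = n.centralBinom := by
  induction n with
  | zero => simp
  | succ n ih =>
    have h := succ_nsmul_multichoose_succ_right (2⁻¹ : K) n
    have hc : ((n + 1 : ℕ) : K) * (n + 1).centralBinom = 2 * (2 * n + 1) * n.centralBinom := by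
      exact_mod_cast congrArg (Nat.cast : ℕ → K) (Nat.succ_mul_centralBinom_succ n)
    rw [nsmul_eq_mul] at h
    apply mul_left_cancel₀ (Nat.cast_ne_zero.mpr n.succ_ne_zero : ((n + 1 : ℕ) : K) ≠ 0)
    rw [hc, ← ih]
    push_cast at h ⊢
    linear_combination (4 : K) ^ (n + 1) * h

end Ring

open Ring

namespace Real

theorem hasSum_multichoose_mul_pow (a : ℝ) {y : ℝ} (hy : |y| < 1) :
    HasSum (fun n : ℕ => multichoose a n * y ^ n) ((1 - y) ^ a)⁻¹ := by
  have h := (one_div_one_sub_rpow_hasFPowerSeriesOnBall_zero a).hasSum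
    (y := y) (by simpa [edist_dist] using hy)
  simpa [FormalMultilinearSeries.ofScalars_apply_eq, multichoose_eq, mul_comm] using h

theorem hasSum_nat_mul_multichoose_mul_pow (a : ℝ) {y : ℝ} (hy : |y| < 1) :
    HasSum (fun n : ℕ => n * multichoose a n * y ^ n) (a * y / (1 - y) ^ (a + 1)) := by
  have hterm (n : ℕ) : ((n : ℝ) + 1) * multichoose a (n + 1) * y ^ (n + 1) =
      a * y * (multichoose (a + 1) n * y ^ n) := by
    rw [← Nat.cast_succ, ← nsmul_eq_mul, succ_nsmul_multichoose_succ_left, pow_succ]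
    ring
  refine (hasSum_nat_add_iff' 1).mp ?_
  simpa [hterm, div_eq_mul_inv] using (hasSum_multichoose_mul_pow (a + 1) hy).mul_left (a * y)

theorem hasSum_nat_mul_centralBinom_mul_pow {x : ℝ} (hx : |x| < 4⁻¹) :
    HasSum (fun n : ℕ => n * n.centralBinom * x ^ n)
      (2 * x / (1 - 4 * x) * √(1 - 4 * x)⁻¹) := by
  have h4x : |4 * x| < 1 := by rw [abs_mul]; norm_num; linarith
  have hpos : 0 < 1 - 4 * x := by linarith [le_abs_self (4 * x)]
  convert hasSum_nat_mul_multichoose_mul_pow 2⁻¹ h4x using 1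
  · ext n
    rw [← multichoose_half_mul_four_pow]
    ring
  · rw [show (2⁻¹ + 1 : ℝ) = 1 + 1 / 2 by norm_num, rpow_add hpos, rpow_one, ← sqrt_eq_rpow,
      sqrt_inv, div_mul_eq_div_div]
    ring

end Real

theorem stmt_14 (m : ℝ) (hm : 4 < |m|) :
    HasSum (fun k : ℕ => (k : ℝ) * (Nat.choose (2 * k) k) / m ^ k)
      (2 / (m - 4) * Real.sqrt (m / (m - 4))) := by
  have hx : |m⁻¹| < 4⁻¹ := by
    rw [abs_inv]
    exact inv_strictAnti₀ (by norm_num) hm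
  have hm0 : m ≠ 0 := by rintro rfl; norm_num at hm
  have hm4 : m - 4 ≠ 0 := by intro h; rw [show m = 4 by linarith] at hm; norm_num at hm
  convert Real.hasSum_nat_mul_centralBinom_mul_pow hx using 1
  · ext k
    rw [Nat.centralBinom_eq_two_mul_choose, inv_pow, div_eq_mul_inv]
  · have hfrac : 1 - 4 * m⁻¹ = (m - 4) / m := by field_simp
    rw [hfrac, inv_div]
    congr 1
    field_simp
end

section
/- The sequence u_n defined by u_n = ∑_{k=0}^n C(2k,k)^2 * C(2(n-k), n-k)^2 satisfies the recurrence (n+2)^3 u_{n+2} = 8(2n+3)(2n^2+6n+5) u_{n+1} - 256(n+1)^3 u_n for all n ≥ 0. -/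
/-!
Write `a m = C(2m, m)²`, so that `(m + 1)² a (m + 1) = 4 (2m + 1)² a m`, and consider the weighted
self-convolutions `T_n[w] = ∑_{i + j = n} w(i, j) a i a j`; then `u n = T_n[1]`. The substitution
`i ↦ i + 1` together with the recurrence of `a` turns `T_{n+1}[i² w(i, j)]` into
`4 T_n[(2i + 1)² w(i + 1, j)]`, and the symmetry `i ↔ j` kills every weight of the form
`g(i, j) - g(j, i)`. With these two rules, `P n = T_n[1]` and `Q n = T_n[i²]` satisfy a first-order
linear system, and eliminating `Q` gives the three-term recurrence for `P`.
-/

open Finset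

namespace Nat

theorem sq_mul_centralBinom_sq_succ {R : Type*} [CommRing R] (m : ℕ) :
    ((m : R) + 1) ^ 2 * ((m + 1).centralBinom : R) ^ 2
      = 4 * (2 * m + 1) ^ 2 * (m.centralBinom : R) ^ 2 := by
  have h := congrArg (Nat.cast : ℕ → R) (succ_mul_centralBinom_succ m)
  push_cast at h
  linear_combination (((m : R) + 1) * ((m + 1).centralBinom : R)
    + 2 * (2 * m + 1) * m.centralBinom) * h

end Nat

section WeightedConv

variable {R : Type*} [CommRing R] (a : ℕ → R)

def weightedConv (w : ℕ → ℕ → R) (n : ℕ) : R :=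
  ∑ p ∈ antidiagonal n, w p.1 p.2 * (a p.1 * a p.2)

variable {a}

theorem weightedConv_congr {w w' : ℕ → ℕ → R} {n : ℕ} (h : ∀ i j, i + j = n → w i j = w' i j) :
    weightedConv a w n = weightedConv a w' n :=
  sum_congr rfl fun p hp => by rw [h p.1 p.2 (mem_antidiagonal.mp hp)]

theorem weightedConv_add (w w' : ℕ → ℕ → R) (n : ℕ) :
    weightedConv a (fun i j => w i j + w' i j) n = weightedConv a w n + weightedConv a w' n := by
  simp only [weightedConv, add_mul, sum_add_distrib]

theorem weightedConv_mul_left (c : R) (w : ℕ → ℕ → R) (n : ℕ) :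
    weightedConv a (fun i j => c * w i j) n = c * weightedConv a w n := by
  simp only [weightedConv, mul_sum, mul_assoc]

theorem weightedConv_swap (w : ℕ → ℕ → R) (n : ℕ) :
    weightedConv a (fun i j => w j i) n = weightedConv a w n := by
  rw [weightedConv, ← Nat.sum_antidiagonal_swap]
  exact sum_congr rfl fun p _ => by simp only [Prod.fst_swap, Prod.snd_swap, mul_comm (a p.2)]

theorem weightedConv_sub_swap (g : ℕ → ℕ → R) (n : ℕ) :
    weightedConv a (fun i j => g i j - g j i) n = 0 := by
  simp only [weightedConv, sub_mul, sum_sub_distrib]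
  exact sub_eq_zero.mpr (weightedConv_swap g n).symm

variable (ha : ∀ m : ℕ, ((m : R) + 1) ^ 2 * a (m + 1) = 4 * (2 * m + 1) ^ 2 * a m)
include ha

theorem weightedConv_sq_mul_succ (w : ℕ → ℕ → R) (n : ℕ) :
    weightedConv a (fun i j => (i : R) ^ 2 * w i j) (n + 1)
      = 4 * weightedConv a (fun i j => (2 * i + 1) ^ 2 * w (i + 1) j) n := by
  rw [weightedConv, Nat.sum_antidiagonal_succ, weightedConv, mul_sum]
  simp only [Nat.cast_zero, zero_pow two_ne_zero, zero_mul, zero_add, Nat.cast_succ]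
  refine sum_congr rfl fun p _ => ?_
  linear_combination (w (p.1 + 1) p.2 * a p.2) * ha p.1

theorem weightedConv_sq_succ (n : ℕ) :
    weightedConv a (fun i _ => (i : R) ^ 2) (n + 1)
      = 16 * weightedConv a (fun i _ => (i : R) ^ 2) n
        + 4 * (2 * n + 1) * weightedConv a (fun _ _ => 1) n := by
  calc weightedConv a (fun i _ => (i : R) ^ 2) (n + 1)
      = 4 * weightedConv a (fun i _ => (2 * i + 1) ^ 2 * 1) n := by
        simpa using weightedConv_sq_mul_succ ha (fun _ _ => 1) n
    _ = 4 * weightedConv a (fun i j => 4 * (i : R) ^ 2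
          + ((2 * n + 1) * 1 + (2 * (i : R) - 2 * j))) n := by
        congr 1
        refine weightedConv_congr fun i j h => ?_
        subst h; push_cast; ring
    _ = _ := by
        rw [weightedConv_add, weightedConv_add, weightedConv_mul_left, weightedConv_mul_left,
          weightedConv_sub_swap (fun i _ => 2 * (i : R))]
        ring

theorem weightedConv_one_succ (n : ℕ) :
    ((n : R) + 1) ^ 3 * weightedConv a (fun _ _ => 1) (n + 1)
      = 8 * (2 * n ^ 3 + 6 * n ^ 2 + 4 * n + 1) * weightedConv a (fun _ _ => 1) n
        - 32 * weightedConv a (fun i _ => (i : R) ^ 2) n := by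
  calc ((n : R) + 1) ^ 3 * weightedConv a (fun _ _ => 1) (n + 1)
      = weightedConv a (fun i j => (i : R) ^ 2 * (2 * i + 6 * j)
          + ((j ^ 3 + 3 * j ^ 2 * i) - (i ^ 3 + 3 * i ^ 2 * j))) (n + 1) := by
        rw [← weightedConv_mul_left]
        refine weightedConv_congr fun i j h => ?_
        rw [← Nat.cast_add_one, ← h]; push_cast; ring
    _ = 4 * weightedConv a (fun i j => (2 * i + 1) ^ 2 * (2 * ((i + 1 : ℕ) : R) + 6 * j)) n := by
        rw [weightedConv_add, weightedConv_sub_swap (fun i j => (j : R) ^ 3 + 3 * j ^ 2 * i),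
          add_zero, weightedConv_sq_mul_succ ha (fun i j => 2 * (i : R) + 6 * j)]
    -- the weight splits into multiples of `1` and `i²` plus an antisymmetric `g i j - g j i`
    _ = 4 * weightedConv a (fun i j => (4 * n ^ 3 + 12 * n ^ 2 + 8 * n + 2) * 1
          + ((-8) * (i : R) ^ 2 + ((4 * i ^ 3 + 12 * i ^ 2 * j + 12 * i ^ 2 + 2 * i)
            - (4 * j ^ 3 + 12 * j ^ 2 * i + 12 * j ^ 2 + 2 * j)))) n := by
        congr 1
        refine weightedConv_congr fun i j h => ?_
        subst h; push_cast; ring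
    _ = _ := by
        rw [weightedConv_add, weightedConv_add, weightedConv_mul_left, weightedConv_mul_left,
          weightedConv_sub_swap (fun i j => 4 * (i : R) ^ 3 + 12 * i ^ 2 * j + 12 * i ^ 2 + 2 * i)]
        ring

theorem weightedConv_one_recurrence (n : ℕ) :
    ((n : R) + 2) ^ 3 * weightedConv a (fun _ _ => 1) (n + 2)
      = 8 * (2 * n + 3) * (2 * n ^ 2 + 6 * n + 5) * weightedConv a (fun _ _ => 1) (n + 1)
        - 256 * ((n : R) + 1) ^ 3 * weightedConv a (fun _ _ => 1) n := by
  have hP := weightedConv_one_succ ha (n + 1)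
  push_cast at hP
  linear_combination hP - 32 * weightedConv_sq_succ ha n - 16 * weightedConv_one_succ ha n

end WeightedConv

theorem stmt_15
    (u : ℕ → ℤ)
    (hu : ∀ n, u n = ∑ k ∈ Finset.range (n + 1),
      ((Nat.choose (2 * k) k : ℤ) ^ 2 * (Nat.choose (2 * (n - k)) (n - k)) ^ 2))
    (n : ℕ) :
    ((n : ℤ) + 2) ^ 3 * u (n + 2)
      = 8 * (2 * (n : ℤ) + 3) * (2 * (n : ℤ) ^ 2 + 6 * n + 5) * u (n + 1)
        - 256 * ((n : ℤ) + 1) ^ 3 * u n := by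
  have hu' : ∀ m, u m = weightedConv (fun k => (k.centralBinom : ℤ) ^ 2) (fun _ _ => 1) m := by
    intro m
    rw [hu, weightedConv, Nat.sum_antidiagonal_eq_sum_range_succ
      (fun i j => 1 * (((i.centralBinom : ℤ) ^ 2) * (j.centralBinom : ℤ) ^ 2))]
    simp only [one_mul, Nat.centralBinom]
  simp only [hu']
  exact weightedConv_one_recurrence Nat.sq_mul_centralBinom_sq_succ n
end
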